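/- Let S be a set and let x_1,…,x_m ∈ S. Define finite sequences S_0, S_1, …, S_m over S and natural numbers k_1,…,k_m as follows: S_0 is the empty sequence, and for each j, S_j is obtained from the sequence S_{j−1}x_j (i.e., S_{j−1} with x_j appended) by deleting its last k_j terms, where either k_j = 0, or k_j ≥ 1 and the last 2k_j terms of S_{j−1}x_j form a repetition of size k_j (its last k_j terms coincide, in order, with the preceding k_j terms). Then the numbers (k_1,…,k_m) together with the final sequence S_m uniquely determine (x_1,…,x_m): if x'_1,…,x'_m ∈ S, with associated sequences S'_0,…,S'_m built with the same deletion amounts k_1,…,k_m, satisfy S'_m = S_m, then x'_j = x_j for all 1 ≤ j ≤ m. -/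
import Mathlib


/-- The sequences `S_0, S_1, …` built from the appended symbols `x 0, x 1, …`
and the deletion amounts `k 0, k 1, …`: `S_0` is empty, and `S_{j+1}` is
obtained from `S_j` by appending `x j` and then deleting the last `k j`
terms. -/
def build {S : Type*} (x : ℕ → S) (k : ℕ → ℕ) : ℕ → List S
  | 0 => []
  | j + 1 =>
      let l := build x k j ++ [x j]
      l.take (l.length - k j)

/-- Validity of the first `m` deletion amounts for the symbols `x`: at each
step `j < m`, either nothing is deleted (`k j = 0`), or `k j ≥ 1` and the last
`2 * k j` terms of `S_j` with `x j` appended form a repetition of size `k j`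
(its last `k j` terms coincide, in order, with the preceding `k j` terms). -/
def ValidErase {S : Type*} (x : ℕ → S) (k : ℕ → ℕ) (m : ℕ) : Prop :=
  ∀ j < m, k j = 0 ∨
    (1 ≤ k j ∧ 2 * k j ≤ (build x k j).length + 1 ∧
      ((build x k j ++ [x j]).drop ((build x k j ++ [x j]).length - 2 * k j)).take (k j)
        = (build x k j ++ [x j]).drop ((build x k j ++ [x j]).length - k j))

lemma reconstruct {S : Type*} (B : List S) (a : S) (kk : ℕ)
    (h : kk = 0 ∨ (1 ≤ kk ∧ 2 * kk ≤ B.length + 1 ∧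
      ((B ++ [a]).drop ((B ++ [a]).length - 2 * kk)).take kk
        = (B ++ [a]).drop ((B ++ [a]).length - kk))) :
    B ++ [a] = ((B ++ [a]).take ((B ++ [a]).length - kk)) ++
      (((B ++ [a]).take ((B ++ [a]).length - kk)).drop
        (((B ++ [a]).take ((B ++ [a]).length - kk)).length - kk)) := by
  set L := B ++ [a] with hL
  rcases h with h0 | ⟨h1, h2, h3⟩
  · simp [h0]
  · have hlen : L.length = B.length + 1 := by simp [hL]
    have hk : 2 * kk ≤ L.length := by omega
    have hlen' : (L.take (L.length - kk)).length = L.length - kk := by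
      rw [List.length_take]; omega
    rw [hlen', show L.length - kk - kk = L.length - 2 * kk by omega,
      List.drop_take, show L.length - kk - (L.length - 2 * kk) = kk by omega, h3]
    exact (List.take_append_drop _ _).symm

/-- The deletion amounts `(k 0, …, k (m-1))` together with the final sequence
`S_m` uniquely determine the appended symbols `(x 0, …, x (m-1))`. -/
theorem erase_decoding_unique {S : Type*} (x x' : ℕ → S) (k : ℕ → ℕ) (m : ℕ)
    (hx : ValidErase x k m) (hx' : ValidErase x' k m)
    (hfin : build x k m = build x' k m) :
    ∀ j < m, x j = x' j := by
  induction m with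
  | zero => intro j hj; omega
  | succ m ih =>
    have key : build x k m ++ [x m] = build x' k m ++ [x' m] := by
      have h1 := reconstruct (build x k m) (x m) (k m) (hx m (by omega))
      have h2 := reconstruct (build x' k m) (x' m) (k m) (hx' m (by omega))
      have e1 : build x k (m+1) = (build x k m ++ [x m]).take
        ((build x k m ++ [x m]).length - k m) := rfl
      have e2 : build x' k (m+1) = (build x' k m ++ [x' m]).take
        ((build x' k m ++ [x' m]).length - k m) := rfl
      rw [h1, h2, ← e1, ← e2, hfin]
    obtain ⟨hB, hxm⟩ := List.append_inj' key (by simp)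
    have hxm' : x m = x' m := by simpa using hxm
    intro j hj
    rcases Nat.lt_succ_iff_lt_or_eq.mp hj with hj' | rfl
    · exact ih (fun i hi => hx i (by omega)) (fun i hi => hx' i (by omega)) hB j hj'
    · exact hxm'
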